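/- arXiv:2401.00156 — 2 statements merged into one kernel-verified Lean document; each statement's English description precedes it below -/
import Mathlib

section
/- Let p be a prime and let R be a radical p-subgroup of a finite group G. Let H be a subgroup of G which contains R and is normalized by N_G(R). Then R is a radical p-subgroup of H. -/
/-- The largest normal `p`-subgroup `O_p(G)` of a group `G`:
the join of all normal `p`-subgroups of `G`. -/
def pCore' (p : ℕ) (G : Type*) [Group G] : Subgroup G :=
  sSup {H : Subgroup G | H.Normal ∧ IsPGroup p H}

/-- `Q` is a radical `p`-subgroup of `G` if `Q = O_p(N_G(Q))`. -/
def IsRadicalPSubgroup (p : ℕ) {G : Type*} [Group G] (Q : Subgroup G) : Prop :=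
  Q.subgroupOf (Subgroup.normalizer (Q : Set G)) = pCore' p (Subgroup.normalizer (Q : Set G))

/-!
Since `N_G(R)` normalizes `H`, the group `N_H(R) = N_G(R) ∩ H` is normal in `N_G(R)`. The
characteristic subgroup `O_p(N_H(R))` is therefore a normal `p`-subgroup of `N_G(R)`, hence lies in
`O_p(N_G(R)) = R`. Conversely `R` is a normal `p`-subgroup of `N_H(R)`.
-/

open Subgroup

section pCore'

variable {p : ℕ} {G G' : Type*} [Group G] [Group G']

theorem le_pCore' {K : Subgroup G} (hK : K.Normal) (hKp : IsPGroup p K) : K ≤ pCore' p G :=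
  le_sSup ⟨hK, hKp⟩

theorem pCore'_normal : (pCore' p G).Normal :=
  sSup_normal _ fun _ hK => hK.1

/-- The normal `p`-subgroups form a directed family (the join of two is again one), so an element
of their join already lies in one of them. -/
theorem isPGroup_pCore' : IsPGroup p (pCore' p G) := by
  have hne : {K : Subgroup G | K.Normal ∧ IsPGroup p K}.Nonempty := ⟨⊥, normal_bot, .of_bot⟩
  have hdir : DirectedOn (· ≤ ·) {K : Subgroup G | K.Normal ∧ IsPGroup p K} :=
    fun K ⟨hK, hKp⟩ L ⟨hL, hLp⟩ => ⟨K ⊔ L, ⟨sup_normal K L, hKp.to_sup_of_normal_right hLp⟩,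
      le_sup_left, le_sup_right⟩
  rintro ⟨g, hg⟩
  obtain ⟨K, hK, hgK⟩ := (mem_sSup_of_directedOn hne hdir).mp hg
  obtain ⟨k, hk⟩ := hK.2 ⟨g, hgK⟩
  exact ⟨k, Subtype.ext (by simpa using congrArg Subtype.val hk)⟩

theorem map_pCore'_le_of_surjective (f : G →* G') (hf : Function.Surjective f) :
    (pCore' p G).map f ≤ pCore' p G' :=
  le_pCore' (pCore'_normal.map f hf) (isPGroup_pCore'.map f)

theorem map_pCore'_equiv (e : G ≃* G') : (pCore' p G).map e.toMonoidHom = pCore' p G' := by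
  refine le_antisymm (map_pCore'_le_of_surjective _ e.surjective) fun x hx => ?_
  exact ⟨e.symm x, map_pCore'_le_of_surjective e.symm.toMonoidHom e.symm.surjective
    (mem_map_of_mem _ hx), e.apply_symm_apply x⟩

/-- `O_p(K)` is characteristic in `K`, so its image is normal whenever the image of `K` is. -/
theorem map_pCore'_le_of_injective {K : Type*} [Group K] (f : K →* G) (hf : Function.Injective f)
    (hn : f.range.Normal) : (pCore' p K).map f ≤ pCore' p G := by
  have : (pCore' p f.range).Characteristic :=
    characteristic_iff_map_eq.mpr fun φ => map_pCore'_equiv φ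
  have hf_eq : f = f.range.subtype.comp (MonoidHom.ofInjective hf).toMonoidHom := rfl
  rw [hf_eq, ← map_map, map_pCore'_equiv]
  exact le_pCore' ConjAct.normal_of_characteristic_of_normal (isPGroup_pCore'.map _)

end pCore'

theorem isRadicalPSubgroup_iff {p : ℕ} {G : Type*} [Group G] {Q : Subgroup G} :
    IsRadicalPSubgroup p Q ↔
      IsPGroup p Q ∧ pCore' p (normalizer (Q : Set G)) ≤ Q.subgroupOf (normalizer (Q : Set G)) := by
  refine ⟨fun hQ => ⟨?_, hQ.ge⟩, fun ⟨hQp, hle⟩ => le_antisymm ?_ hle⟩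
  · exact (hQ ▸ isPGroup_pCore').of_equiv (subgroupOfEquivOfLe le_normalizer)
  · exact le_pCore' normal_in_normalizer (hQp.comap_of_injective _ (normalizer _).subtype_injective)

section Normalizer

variable {G : Type*} [Group G] {R H : Subgroup G}

def normalizerSubgroupOfHom (hRH : R ≤ H) :
    normalizer ((R.subgroupOf H : Subgroup H) : Set H) →* normalizer (R : Set G) :=
  (H.subtype.comp (normalizer _).subtype).codRestrict _ fun x =>
    (SetLike.ext_iff.mp (subgroupOf_normalizer_eq hRH) _).mpr x.2

theorem normalizerSubgroupOfHom_injective (hRH : R ≤ H) :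
    Function.Injective (normalizerSubgroupOfHom hRH) := fun _ _ hxy =>
  Subtype.ext (Subtype.ext (congrArg (fun n : normalizer (R : Set G) => (n : G)) hxy))

theorem range_normalizerSubgroupOfHom (hRH : R ≤ H) :
    (normalizerSubgroupOfHom hRH).range = H.subgroupOf (normalizer (R : Set G)) := by
  ext n
  refine ⟨?_, fun hn => ?_⟩
  · rintro ⟨x, rfl⟩
    exact (x : H).2
  · refine ⟨⟨⟨n, hn⟩, ?_⟩, rfl⟩
    rw [← subgroupOf_normalizer_eq hRH]
    exact n.2

end Normalizer

theorem statement_3_general {G : Type*} [Group G] {p : ℕ}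
    (R H : Subgroup G) (hR : IsRadicalPSubgroup p R)
    (hRH : R ≤ H) (hnorm : Subgroup.normalizer (R : Set G) ≤ Subgroup.normalizer (H : Set G)) :
    IsRadicalPSubgroup p (R.subgroupOf H) := by
  obtain ⟨hRp, -⟩ := isRadicalPSubgroup_iff.mp hR
  refine isRadicalPSubgroup_iff.mpr ⟨hRp.comap_of_injective _ H.subtype_injective, fun x hx => ?_⟩
  have hrange : (normalizerSubgroupOfHom hRH).range.Normal := by
    rw [range_normalizerSubgroupOfHom]
    exact normal_subgroupOf_of_le_normalizer hnorm
  have hxR : normalizerSubgroupOfHom hRH x ∈ pCore' p (normalizer (R : Set G)) :=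
    map_pCore'_le_of_injective _ (normalizerSubgroupOfHom_injective hRH) hrange
      (mem_map_of_mem _ hx)
  rw [← hR] at hxR
  exact hxR

/-- Let `R` be a radical `p`-subgroup of a finite group `G`, and let `H` be a subgroup of `G`
containing `R` and normalized by `N_G(R)`.  Then `R` is a radical `p`-subgroup of `H`. -/
theorem statement_3 {G : Type*} [Group G] [Finite G] {p : ℕ} (hp : p.Prime)
    (R H : Subgroup G) (hR : IsRadicalPSubgroup p R)
    (hRH : R ≤ H) (hnorm : Subgroup.normalizer (R : Set G) ≤ Subgroup.normalizer (H : Set G)) :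
    IsRadicalPSubgroup p (R.subgroupOf H) :=
  statement_3_general R H hR hRH hnorm
end

section
/- Let q be an odd prime power and let V be a finite-dimensional vector space over F_q equipped with a nondegenerate symmetric bilinear form f. If there exist isometries X and Y of (V, f) with X ∘ X = id_V and Y ∘ X ∘ Y⁻¹ = −X, then dim V is even and the discriminant of f is trivial; that is, for any basis of V, the determinant of the Gram matrix of f is a square in F_q^×. -/
/-!
The involution `X` splits `V` into its `±1`-eigenspaces `V₊ ⊕ V₋`, which are orthogonal since `X`
is an isometry and `2 ≠ 0`. As `Y X Y⁻¹ = -X`, the isometry `Y` maps `V₊` onto `V₋`, so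
`dim V = 2 dim V₊`, and for a basis `c` of `V₊` the basis `(c, Y c)` of `V` has Gram matrix
`diag(G, G)`, of determinant `(det G)²`. A change of basis multiplies the Gram determinant by a
square, and nondegeneracy makes it nonzero.
-/

open Module LinearMap Module.End Matrix

lemma FiniteField.two_ne_zero_of_odd_card {K : Type*} [Field K] [Fintype K]
    (h : Odd (Fintype.card K)) : (2 : K) ≠ 0 :=
  Ring.two_ne_zero fun hK ↦ Nat.not_odd_iff_even.mpr
    (Nat.even_iff.mpr (FiniteField.even_card_iff_char_two.mp hK)) h

section Eigenspace

variable {K V : Type*} [Field K] [AddCommGroup V] [Module K V]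

lemma isCompl_eigenspace_one_neg_one (h2 : (2 : K) ≠ 0) (f : End K V) (hf : ∀ v, f (f v) = v) :
    IsCompl (f.eigenspace 1) (f.eigenspace (-1)) := by
  refine ⟨f.eigenspaces_iSupIndep.pairwiseDisjoint fun h ↦ h2 (by linear_combination h), ?_⟩
  rw [codisjoint_iff, eq_top_iff]
  intro v _
  refine Submodule.mem_sup.mpr
    ⟨(2 : K)⁻¹ • (v + f v), ?_, (2 : K)⁻¹ • (v - f v), ?_, ?_⟩
  · simp [hf, add_comm]
  · simp [hf, ← smul_neg]
  · rw [← smul_add, add_add_sub_cancel, ← two_smul K, smul_smul, inv_mul_cancel₀ h2, one_smul]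

lemma map_eigenspace_of_conj_eq_neg (f : End K V) (g : V ≃ₗ[K] V)
    (hg : ∀ v, g (f (g.symm v)) = -f v) (μ : K) :
    (f.eigenspace μ).map (g : V →ₗ[K] V) = f.eigenspace (-μ) := by
  ext v
  rw [Submodule.mem_map_equiv, mem_eigenspace_iff, mem_eigenspace_iff, ← g.injective.eq_iff,
    hg, map_smul, g.apply_symm_apply, neg_eq_iff_eq_neg, neg_smul]

lemma LinearMap.BilinForm.apply_eq_zero_of_mem_eigenspace (B : LinearMap.BilinForm K V)
    (f : End K V) (hf : ∀ u v, B (f u) (f v) = B u v) {μ ν : K} (hμν : μ * ν ≠ 1) {u v : V}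
    (hu : u ∈ f.eigenspace μ) (hv : v ∈ f.eigenspace ν) : B u v = 0 := by
  rw [mem_eigenspace_iff] at hu hv
  have h := hf u v
  simp only [hu, hv, map_smul, LinearMap.smul_apply, smul_eq_mul] at h
  by_contra hne
  exact hμν (mul_right_cancel₀ hne (by linear_combination h))

end Eigenspace

namespace LinearMap.BilinForm

variable {R M : Type*} [CommRing R] [AddCommGroup M] [Module R M] (B : LinearMap.BilinForm R M)
  {ι ι' : Type*} [Fintype ι] [DecidableEq ι] [Fintype ι'] [DecidableEq ι']

lemma isSquare_det_toMatrix_of_basis [Nontrivial R] (b : Basis ι R M) (b' : Basis ι' R M)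
    (h : IsSquare (toMatrix b B).det) : IsSquare (toMatrix b' B).det := by
  set e := b.indexEquiv b'
  have hreindex : toMatrix (b.reindex e) B = (toMatrix b B).submatrix e.symm e.symm := by
    ext i j
    simp [toMatrix_apply]
  obtain ⟨r, hr⟩ := h
  refine ⟨((b.reindex e).toMatrix b').det * r, ?_⟩
  rw [← toMatrix_mul_basis_toMatrix (b.reindex e) b', det_mul, det_mul, det_transpose, hreindex,
    det_submatrix_equiv_self, hr]
  ring

lemma toMatrix_prodEquivOfIsCompl_eq_fromBlocks {p q : Submodule R M} (hpq : IsCompl p q)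
    (hpq_orth : ∀ x ∈ p, ∀ y ∈ q, B x y = 0) (hqp_orth : ∀ y ∈ q, ∀ x ∈ p, B y x = 0)
    (e : p ≃ₗ[R] q) (he : ∀ x y : p, B (e x) (e y) = B x y) (c : Basis ι R p) :
    toMatrix ((c.prod (c.map e)).map (Submodule.prodEquivOfIsCompl p q hpq)) B =
      fromBlocks (toMatrix c (B.restrict p)) 0 0 (toMatrix c (B.restrict p)) := by
  ext (i | i) (j | j) <;> simp [toMatrix_apply, hpq_orth, hqp_orth, he]

lemma isSquare_det_toMatrix_of_isCompl [Nontrivial R] {p q : Submodule R M} (hpq : IsCompl p q)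
    (hpq_orth : ∀ x ∈ p, ∀ y ∈ q, B x y = 0) (hqp_orth : ∀ y ∈ q, ∀ x ∈ p, B y x = 0)
    (e : p ≃ₗ[R] q) (he : ∀ x y : p, B (e x) (e y) = B x y) (c : Basis ι R p)
    (b : Basis ι' R M) : IsSquare (toMatrix b B).det := by
  refine B.isSquare_det_toMatrix_of_basis
    ((c.prod (c.map e)).map (Submodule.prodEquivOfIsCompl p q hpq)) b
    ⟨(toMatrix c (B.restrict p)).det, ?_⟩
  rw [B.toMatrix_prodEquivOfIsCompl_eq_fromBlocks hpq hpq_orth hqp_orth e he c,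
    det_fromBlocks_zero₂₁]

end LinearMap.BilinForm

theorem statement_14_general (q : ℕ) (hq : Odd q)
    (F : Type*) [Field F] [Fintype F] (hcard : Fintype.card F = q)
    (V : Type*) [AddCommGroup V] [Module F V] [FiniteDimensional F V]
    (B : LinearMap.BilinForm F V)
    (hnd : ∀ u : V, (∀ v : V, B u v = 0) → u = 0)
    (X Y : V ≃ₗ[F] V)
    (hXiso : ∀ u v : V, B (X u) (X v) = B u v)
    (hYiso : ∀ u v : V, B (Y u) (Y v) = B u v)
    (hX2 : ∀ v : V, X (X v) = v)
    (hconj : ∀ v : V, Y (X (Y.symm v)) = -(X v)) :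
    Even (Module.finrank F V) ∧
      ∀ (ι : Type) [Fintype ι] [DecidableEq ι] (b : Module.Basis ι F V),
        ∃ c : F, c ≠ 0 ∧ (Matrix.of fun i j => B (b i) (b j)).det = c ^ 2 := by
  have h2 : (2 : F) ≠ 0 := FiniteField.two_ne_zero_of_odd_card (hcard ▸ hq)
  have hne : (-1 : F) ≠ 1 := fun h ↦ h2 (by linear_combination -h)
  set Vp := eigenspace (X : End F V) 1
  set Vm := eigenspace (X : End F V) (-1)
  have hcompl : IsCompl Vp Vm := isCompl_eigenspace_one_neg_one h2 _ hX2
  let e : Vp ≃ₗ[F] Vm := Y.ofSubmodules Vp Vm (map_eigenspace_of_conj_eq_neg _ Y hconj 1)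
  refine ⟨⟨finrank F Vp, by rw [← Submodule.finrank_add_eq_of_isCompl hcompl, e.finrank_eq]⟩,
    fun ι _ _ b ↦ ?_⟩
  obtain ⟨r, hr⟩ := B.isSquare_det_toMatrix_of_isCompl hcompl
    (fun _ hx _ hy ↦ B.apply_eq_zero_of_mem_eigenspace _ hXiso (by simpa using hne) hx hy)
    (fun _ hy _ hx ↦ B.apply_eq_zero_of_mem_eigenspace _ hXiso (by simpa using hne) hy hx)
    e (fun x y ↦ hYiso x y) (finBasis F Vp) b
  have hdet : (LinearMap.BilinForm.toMatrix b B).det ≠ 0 :=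
    (LinearMap.BilinForm.nondegenerate_iff_det_ne_zero b).mp (.ofSeparatingLeft hnd)
  have hgram : Matrix.of (fun i j ↦ B (b i) (b j)) = LinearMap.BilinForm.toMatrix b B :=
    Matrix.ext fun i j ↦ (LinearMap.BilinForm.toMatrix_apply b B i j).symm
  exact ⟨r, fun hr0 ↦ hdet (by simp [hr, hr0]), by rw [hgram, hr, sq]⟩

/-- Let `q` be an odd prime power and `(V, B)` a finite-dimensional F_q-vector space with a
nondegenerate symmetric bilinear form.  If there are isometries `X, Y` of `(V, B)` with
`X ∘ X = id` and `Y ∘ X ∘ Y⁻¹ = -X`, then `dim V` is even and the discriminant of `B` is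
trivial: for every basis, the determinant of the Gram matrix is a nonzero square. -/
theorem statement_14 (q : ℕ) (hq : Odd q) (hpp : IsPrimePow q)
    (F : Type*) [Field F] [Fintype F] (hcard : Fintype.card F = q)
    (V : Type*) [AddCommGroup V] [Module F V] [FiniteDimensional F V]
    (B : LinearMap.BilinForm F V)
    (hsymm : ∀ u v : V, B u v = B v u)
    (hnd : ∀ u : V, (∀ v : V, B u v = 0) → u = 0)
    (X Y : V ≃ₗ[F] V)
    (hXiso : ∀ u v : V, B (X u) (X v) = B u v)
    (hYiso : ∀ u v : V, B (Y u) (Y v) = B u v)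
    (hX2 : ∀ v : V, X (X v) = v)
    (hconj : ∀ v : V, Y (X (Y.symm v)) = -(X v)) :
    Even (Module.finrank F V) ∧
      ∀ (ι : Type) [Fintype ι] [DecidableEq ι] (b : Module.Basis ι F V),
        ∃ c : F, c ≠ 0 ∧ (Matrix.of fun i j => B (b i) (b j)).det = c ^ 2 :=
  statement_14_general q hq F hcard V B hnd X Y hXiso hYiso hX2 hconj
end
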